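/- arXiv:2402.15467 — 5 statements merged into one kernel-verified Lean document; each statement's English description precedes it below -/
import Mathlib

section
/- Let g(s) = s^γ + α·s^β with α ≥ 0 and 0 ≤ β ≤ 1, 0 ≤ γ ≤ 1. Then for all s > 0, the inequality 0 ≤ 2s·g'(s)² − s·g''(s)·g(s) ≤ 2·g'(s)·g(s) holds, where g'(s) = γ s^{γ−1} + αβ s^{β−1} and g''(s) = γ(γ−1) s^{γ−2} + αβ(β−1) s^{β−2}. -/
/-! Write `g = ∑ xᵢ` with power terms `xᵢ = cᵢ s ^ pᵢ`, `cᵢ ≥ 0`, `pᵢ ∈ [0, 1]`. Then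
`s g' = ∑ pᵢ xᵢ =: u`, `s² g'' = ∑ pᵢ (pᵢ - 1) xᵢ =: v` and both inequalities, multiplied by `s`,
become `0 ≤ 2u² - v g ≤ 2u g`. The lower bound holds because `v ≤ 0`. The upper bound is
`(∑ pᵢ (1 - pᵢ) xᵢ) (∑ xⱼ) ≤ 2 (∑ pᵢ xᵢ) (∑ (1 - pⱼ) xⱼ)`; expanded as a double sum and
symmetrised in `i, j`, its coefficient of `xᵢ xⱼ` is `(pᵢ - pⱼ)² + pᵢ (1 - pⱼ) + pⱼ (1 - pᵢ) ≥ 0`. -/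

section WeightedSums

variable {ι : Type*} (t : Finset ι) (p x : ι → ℝ)

theorem sum_mul_sum_le_two_mul_sum_mul_sum
    (hp0 : ∀ i ∈ t, 0 ≤ p i) (hp1 : ∀ i ∈ t, p i ≤ 1) (hx : ∀ i ∈ t, 0 ≤ x i) :
    (∑ i ∈ t, p i * (1 - p i) * x i) * ∑ i ∈ t, x i
      ≤ 2 * (∑ i ∈ t, p i * x i) * ∑ i ∈ t, (1 - p i) * x i := by
  set F : ι → ι → ℝ := fun i j ↦ (2 * p i * (1 - p j) - p i * (1 - p i)) * (x i * x j)
  have h_diff : 2 * (∑ i ∈ t, p i * x i) * (∑ i ∈ t, (1 - p i) * x i)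
      - (∑ i ∈ t, p i * (1 - p i) * x i) * ∑ i ∈ t, x i = ∑ i ∈ t, ∑ j ∈ t, F i j := by
    rw [mul_assoc, Finset.sum_mul_sum, Finset.sum_mul_sum, Finset.mul_sum,
      ← Finset.sum_sub_distrib]
    refine Finset.sum_congr rfl fun i _ ↦ ?_
    rw [Finset.mul_sum, ← Finset.sum_sub_distrib]
    exact Finset.sum_congr rfl fun j _ ↦ by ring
  have h_symm : 2 * ∑ i ∈ t, ∑ j ∈ t, F i j = ∑ i ∈ t, ∑ j ∈ t, (F i j + F j i) := by
    rw [two_mul]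
    nth_rewrite 2 [Finset.sum_comm]
    simp only [← Finset.sum_add_distrib]
  have h_nonneg : 0 ≤ ∑ i ∈ t, ∑ j ∈ t, (F i j + F j i) := by
    refine Finset.sum_nonneg fun i hi ↦ Finset.sum_nonneg fun j hj ↦ ?_
    have hk : 0 ≤ (p i - p j) ^ 2 + p i * (1 - p j) + p j * (1 - p i) := by
      nlinarith [sq_nonneg (p i - p j), hp0 i hi, hp0 j hj, hp1 i hi, hp1 j hj]
    calc (0 : ℝ) ≤ ((p i - p j) ^ 2 + p i * (1 - p j) + p j * (1 - p i)) * (x i * x j) :=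
          mul_nonneg hk (mul_nonneg (hx i hi) (hx j hj))
      _ = F i j + F j i := by simp only [F]; ring
  linarith

theorem two_mul_sq_sub_mul_nonneg (hp0 : ∀ i ∈ t, 0 ≤ p i) (hp1 : ∀ i ∈ t, p i ≤ 1)
    (hx : ∀ i ∈ t, 0 ≤ x i) :
    0 ≤ 2 * (∑ i ∈ t, p i * x i) ^ 2
      - (∑ i ∈ t, p i * (p i - 1) * x i) * ∑ i ∈ t, x i := by
  have hv : ∑ i ∈ t, p i * (p i - 1) * x i ≤ 0 :=
    Finset.sum_nonpos fun i hi ↦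
      mul_nonpos_of_nonpos_of_nonneg
        (mul_nonpos_of_nonneg_of_nonpos (hp0 i hi) (by linarith [hp1 i hi])) (hx i hi)
  have hw : 0 ≤ ∑ i ∈ t, x i := Finset.sum_nonneg hx
  nlinarith [mul_nonpos_of_nonpos_of_nonneg hv hw]

theorem two_mul_sq_sub_mul_le (hp0 : ∀ i ∈ t, 0 ≤ p i) (hp1 : ∀ i ∈ t, p i ≤ 1)
    (hx : ∀ i ∈ t, 0 ≤ x i) :
    2 * (∑ i ∈ t, p i * x i) ^ 2 - (∑ i ∈ t, p i * (p i - 1) * x i) * ∑ i ∈ t, x i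
      ≤ 2 * (∑ i ∈ t, p i * x i) * ∑ i ∈ t, x i := by
  have h1 : ∑ i ∈ t, (1 - p i) * x i = ∑ i ∈ t, x i - ∑ i ∈ t, p i * x i := by
    rw [← Finset.sum_sub_distrib]
    exact Finset.sum_congr rfl fun i _ ↦ by ring
  have h2 : ∑ i ∈ t, p i * (p i - 1) * x i = -∑ i ∈ t, p i * (1 - p i) * x i := by
    rw [← Finset.sum_neg_distrib]
    exact Finset.sum_congr rfl fun i _ ↦ by ring
  have key := sum_mul_sum_le_two_mul_sum_mul_sum t p x hp0 hp1 hx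
  rw [h1] at key
  rw [h2]
  nlinarith

end WeightedSums

theorem stmt_4 (α β γ : ℝ) (hα : 0 ≤ α)
    (hβ0 : 0 ≤ β) (hβ1 : β ≤ 1) (hγ0 : 0 ≤ γ) (hγ1 : γ ≤ 1)
    (s : ℝ) (hs : 0 < s) :
    0 ≤ 2 * s * (γ * s ^ (γ - 1) + α * β * s ^ (β - 1)) ^ 2
        - s * (γ * (γ - 1) * s ^ (γ - 2) + α * β * (β - 1) * s ^ (β - 2))
            * (s ^ γ + α * s ^ β) ∧
    2 * s * (γ * s ^ (γ - 1) + α * β * s ^ (β - 1)) ^ 2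
        - s * (γ * (γ - 1) * s ^ (γ - 2) + α * β * (β - 1) * s ^ (β - 2))
            * (s ^ γ + α * s ^ β)
      ≤ 2 * (γ * s ^ (γ - 1) + α * β * s ^ (β - 1)) * (s ^ γ + α * s ^ β) := by
  have hpow1 (q : ℝ) : s ^ (q - 1) = s ^ q / s := Real.rpow_sub_one hs.ne' q
  have hpow2 (q : ℝ) : s ^ (q - 2) = s ^ q / s ^ 2 := by
    exact_mod_cast Real.rpow_sub_natCast hs.ne' q 2
  set p : Fin 2 → ℝ := ![γ, β]
  set x : Fin 2 → ℝ := ![s ^ γ, α * s ^ β]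
  have hp0 : ∀ i ∈ Finset.univ, 0 ≤ p i := by simp [p, Fin.forall_fin_two, *]
  have hp1 : ∀ i ∈ Finset.univ, p i ≤ 1 := by simp [p, Fin.forall_fin_two, *]
  have hx : ∀ i ∈ Finset.univ, 0 ≤ x i := by
    simp only [x, Finset.mem_univ, forall_const, Fin.forall_fin_two]
    exact ⟨by simp; positivity, by simp; positivity⟩
  have hlow := two_mul_sq_sub_mul_nonneg _ p x hp0 hp1 hx
  have hup := two_mul_sq_sub_mul_le _ p x hp0 hp1 hx
  simp only [Fin.sum_univ_two, p, x, Matrix.cons_val_zero, Matrix.cons_val_one] at hlow hup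
  rw [hpow1, hpow1, hpow2, hpow2]
  constructor
  · refine (div_nonneg hlow hs.le).trans_eq ?_
    field_simp
  · refine (Eq.trans_le ?_ (div_le_div_of_nonneg_right hup hs.le)).trans_eq ?_ <;>
      field_simp
end

section
/- Let α ≥ 0 and β, γ ∈ [0,1]. Then for all s > 0: γ(γ−1) s^{2γ−2} + α²β(β−1) s^{2β−2} + α(4βγ − β² − β − γ² − γ) s^{γ+β−2} ≤ 0. -/
/-! Each of the three terms is a nonpositive coefficient times a positive power of `s`. The only
nontrivial coefficient is the mixed one, which is
`-(β - γ) ^ 2 - β * (1 - γ) - γ * (1 - β)`. -/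

lemma mul_sub_one_nonpos {x : ℝ} (h0 : 0 ≤ x) (h1 : x ≤ 1) : x * (x - 1) ≤ 0 :=
  mul_nonpos_of_nonneg_of_nonpos h0 (sub_nonpos.mpr h1)

lemma four_mul_mul_sub_sq_sub_sub_sq_sub_nonpos {β γ : ℝ} (hβ0 : 0 ≤ β) (hβ1 : β ≤ 1)
    (hγ0 : 0 ≤ γ) (hγ1 : γ ≤ 1) : 4 * β * γ - β ^ 2 - β - γ ^ 2 - γ ≤ 0 := by
  have hβ : 0 ≤ β * (1 - γ) := mul_nonneg hβ0 (sub_nonneg.mpr hγ1)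
  have hγ : 0 ≤ γ * (1 - β) := mul_nonneg hγ0 (sub_nonneg.mpr hβ1)
  nlinarith [sq_nonneg (β - γ)]

theorem stmt_6 (α β γ : ℝ) (hα : 0 ≤ α)
    (hβ0 : 0 ≤ β) (hβ1 : β ≤ 1) (hγ0 : 0 ≤ γ) (hγ1 : γ ≤ 1)
    (s : ℝ) (hs : 0 < s) :
    γ * (γ - 1) * s ^ (2 * γ - 2) + α ^ 2 * β * (β - 1) * s ^ (2 * β - 2)
      + α * (4 * β * γ - β ^ 2 - β - γ ^ 2 - γ) * s ^ (γ + β - 2) ≤ 0 := by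
  have hγγ : γ * (γ - 1) ≤ 0 := mul_sub_one_nonpos hγ0 hγ1
  have hββ : α ^ 2 * β * (β - 1) ≤ 0 := by
    rw [mul_assoc]
    exact mul_nonpos_of_nonneg_of_nonpos (sq_nonneg α) (mul_sub_one_nonpos hβ0 hβ1)
  have hβγ : α * (4 * β * γ - β ^ 2 - β - γ ^ 2 - γ) ≤ 0 :=
    mul_nonpos_of_nonneg_of_nonpos hα
      (four_mul_mul_sub_sq_sub_sub_sq_sub_nonpos hβ0 hβ1 hγ0 hγ1)
  refine add_nonpos (add_nonpos ?_ ?_) ?_ <;>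
    exact mul_nonpos_of_nonpos_of_nonneg ‹_› (Real.rpow_nonneg hs.le _)
end

section
/- For constants α ≥ 0, B > 0 and β, γ ∈ [0,1], the function h₂(x) = x²(γ(B+x)^{γ−1} + αβ(B+x)^{β−1}) / ((B+x)^γ + α(B+x)^β)² is increasing (non-decreasing) on the set {x > max(0, 1−B)}. -/
/-!
Write `u t = t ^ γ + α t ^ β`, so that the function is `x² u'(B + x) / u(B + x)²`. Its derivative
is `x ((2u' + x u'') u - 2x u'²) / u³` at `t = B + x`. Factoring `t ^ (γ - 2)` and `t ^ (β - 2)`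
out of `u, u', u''` turns the bracket into `t²` times a quadratic form in these two powers whose
coefficients are visibly nonnegative once `B ≥ 0` and `β, γ ∈ [0, 1]`.
-/

open Set

lemma hasDerivAt_sq_mul_comp_const_add_div_sq {u v : ℝ → ℝ} {u' v' B x : ℝ}
    (hu : HasDerivAt u u' (B + x)) (hv : HasDerivAt v v' (B + x)) (hu₀ : u (B + x) ≠ 0) :
    HasDerivAt (fun y => y ^ 2 * v (B + y) / u (B + y) ^ 2)
      (x * ((2 * v (B + x) + x * v') * u (B + x) - 2 * x * v (B + x) * u') / u (B + x) ^ 3) x := by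
  refine (((hasDerivAt_pow 2 x).fun_mul (hv.comp_const_add B x)).fun_div
    ((hu.comp_const_add B x).fun_pow 2) (pow_ne_zero 2 hu₀)).congr_deriv ?_
  field_simp
  ring

lemma hasDerivAt_mul_rpow_add_mul_rpow {c d p q t : ℝ} (ht : t ≠ 0) :
    HasDerivAt (fun t => c * t ^ p + d * t ^ q)
      (c * p * t ^ (p - 1) + d * q * t ^ (q - 1)) t := by
  refine (((Real.hasDerivAt_rpow_const (Or.inl ht)).const_mul c).fun_add
    ((Real.hasDerivAt_rpow_const (Or.inl ht)).const_mul d)).congr_deriv ?_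
  ring

lemma deriv_numerator_nonneg {α β γ B x P Q : ℝ} (hα : 0 ≤ α) (hB : 0 ≤ B) (hx : 0 ≤ x)
    (hβ0 : 0 ≤ β) (hβ1 : β ≤ 1) (hγ0 : 0 ≤ γ) (hγ1 : γ ≤ 1) (hP : 0 ≤ P) (hQ : 0 ≤ Q) :
    0 ≤ (2 * ((γ * P + α * β * Q) * (B + x)) + x * (γ * (γ - 1) * P + α * β * (β - 1) * Q))
          * ((P + α * Q) * (B + x) ^ 2)
        - 2 * x * ((γ * P + α * β * Q) * (B + x)) * ((γ * P + α * β * Q) * (B + x)) := by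
  have hPQ : 0 ≤ 2 * (γ + β) * B + ((β - γ) ^ 2 + β * (1 - γ) + γ * (1 - β)) * x := by
    have : 0 ≤ (β - γ) ^ 2 + β * (1 - γ) + γ * (1 - β) := by nlinarith
    positivity
  have hPP : 0 ≤ 2 * B + (1 - γ) * x := by nlinarith
  have hQQ : 0 ≤ 2 * B + (1 - β) * x := by nlinarith
  calc (0 : ℝ) ≤ (B + x) ^ 2 * (γ * P ^ 2 * (2 * B + (1 - γ) * x)
          + α * P * Q * (2 * (γ + β) * B + ((β - γ) ^ 2 + β * (1 - γ) + γ * (1 - β)) * x)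
          + α ^ 2 * β * Q ^ 2 * (2 * B + (1 - β) * x)) := by positivity
    _ = _ := by ring

lemma monotoneOn_sq_mul_deriv_div_sq_Ioi {α β γ B : ℝ} (hα : 0 ≤ α) (hB : 0 ≤ B)
    (hβ0 : 0 ≤ β) (hβ1 : β ≤ 1) (hγ0 : 0 ≤ γ) (hγ1 : γ ≤ 1) :
    MonotoneOn
      (fun x : ℝ =>
        x ^ 2 * (γ * (B + x) ^ (γ - 1) + α * β * (B + x) ^ (β - 1))
          / ((B + x) ^ γ + α * (B + x) ^ β) ^ 2)
      (Ioi 0) := by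
  set u : ℝ → ℝ := fun t => t ^ γ + α * t ^ β
  set v : ℝ → ℝ := fun t => γ * t ^ (γ - 1) + α * β * t ^ (β - 1)
  set v' : ℝ → ℝ := fun t => γ * (γ - 1) * t ^ (γ - 1 - 1) + α * β * (β - 1) * t ^ (β - 1 - 1)
  have hderiv : ∀ x ∈ Ioi (0 : ℝ), HasDerivAt (fun y => y ^ 2 * v (B + y) / u (B + y) ^ 2)
      (x * ((2 * v (B + x) + x * v' (B + x)) * u (B + x) - 2 * x * v (B + x) * v (B + x))
        / u (B + x) ^ 3) x := fun x (hx : 0 < x) => by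
    have ht : B + x ≠ 0 := by positivity
    have hu : HasDerivAt u (v (B + x)) (B + x) := by
      simpa only [one_mul] using hasDerivAt_mul_rpow_add_mul_rpow (c := 1) (d := α) ht
    exact hasDerivAt_sq_mul_comp_const_add_div_sq hu (hasDerivAt_mul_rpow_add_mul_rpow ht)
      (by positivity)
  show MonotoneOn (fun y => y ^ 2 * v (B + y) / u (B + y) ^ 2) (Ioi 0)
  refine monotoneOn_of_deriv_nonneg (convex_Ioi 0)
    (fun x hx => (hderiv x hx).continuousAt.continuousWithinAt) ?_ ?_ <;> rw [interior_Ioi]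
  · exact fun x hx => (hderiv x hx).differentiableAt.differentiableWithinAt
  intro x (hx : 0 < x)
  rw [(hderiv x hx).deriv]
  have ht : 0 < B + x := by positivity
  have hnum := deriv_numerator_nonneg (P := (B + x) ^ γ / (B + x) ^ 2)
    (Q := (B + x) ^ β / (B + x) ^ 2) hα hB hx.le hβ0 hβ1 hγ0 hγ1 (by positivity) (by positivity)
  simp only [u, v, v', Real.rpow_sub_one ht.ne']
  refine div_nonneg (mul_nonneg hx.le ?_) (by positivity)
  exact hnum.trans_eq (by field_simp)

theorem stmt_9 (α B β γ : ℝ) (hα : 0 ≤ α) (hB : 0 < B)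
    (hβ0 : 0 ≤ β) (hβ1 : β ≤ 1) (hγ0 : 0 ≤ γ) (hγ1 : γ ≤ 1) :
    MonotoneOn
      (fun x : ℝ =>
        x ^ 2 * (γ * (B + x) ^ (γ - 1) + α * β * (B + x) ^ (β - 1))
          / ((B + x) ^ γ + α * (B + x) ^ β) ^ 2)
      (Set.Ioi (max 0 (1 - B))) :=
  (monotoneOn_sq_mul_deriv_div_sq_Ioi hα hB.le hβ0 hβ1 hγ0 hγ1).mono
    (Ioi_subset_Ioi (le_max_left _ _))
end

section
/- Suppose x = (x₁,...,x_n) ∈ (0,∞)^n, s = ∑_i x_i, and for each i the first-order condition μ/(s^γ + α s^β) − μ x_i(γ s^{γ−1} + αβ s^{β−1})/(s^γ + α s^β)² − c_i ρ x_i^{ρ−1} = 0 holds, where 0 < c₁ ≤ ... ≤ c_n, μ, α ≥ 0, 0 ≤ β ≤ γ ≤ 1, ρ > 1. Then x₁ ≥ x₂ ≥ ... ≥ x_n. -/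
/-!
Each first-order condition says that `c i * ρ * x i ^ (ρ - 1) + K * x i` equals the common value
`μ / (s ^ γ + α * s ^ β)`, where `K = μ (γ s^(γ-1) + α β s^(β-1)) / (s^γ + α s^β)^2 ≥ 0` does not
depend on `i`. The left-hand side is strictly increasing in `x i` and weakly increasing in `c i`,
so `c i ≤ c j` and `x i < x j` would make the two sides differ.
-/

open Finset

lemma mul_rpow_add_mul_lt_of_lt {a b p K t u : ℝ} (ha : 0 < a) (hab : a ≤ b) (hp : 0 < p)
    (hK : 0 ≤ K) (ht : 0 ≤ t) (htu : t < u) :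
    a * t ^ p + K * t < b * u ^ p + K * u := by
  have hpow : t ^ p < u ^ p := Real.rpow_lt_rpow ht htu hp
  have hcost : a * t ^ p < b * u ^ p :=
    calc a * t ^ p < a * u ^ p := mul_lt_mul_of_pos_left hpow ha
      _ ≤ b * u ^ p := mul_le_mul_of_nonneg_right hab (Real.rpow_nonneg (ht.trans htu.le) p)
  linarith [mul_le_mul_of_nonneg_left htu.le hK]

theorem stmt_12_general (n : ℕ) (μ α β γ ρ : ℝ) (c x : Fin n → ℝ)
    (hμ : 0 < μ) (hα : 0 ≤ α) (hβ0 : 0 ≤ β) (hβγ : β ≤ γ) (hρ : 1 < ρ)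
    (hc0 : ∀ i, 0 < c i) (hc : Monotone c)
    (hx : ∀ i, 0 < x i)
    (s : ℝ) (hs : s = ∑ i, x i)
    (hfoc : ∀ i, μ / (s ^ γ + α * s ^ β)
        - μ * x i * (γ * s ^ (γ - 1) + α * β * s ^ (β - 1)) / (s ^ γ + α * s ^ β) ^ 2
        - c i * ρ * (x i) ^ (ρ - 1) = 0) :
    ∀ i j : Fin n, i ≤ j → x j ≤ x i := by
  intro i j hij
  by_contra! hlt
  set K := μ * (γ * s ^ (γ - 1) + α * β * s ^ (β - 1)) / (s ^ γ + α * s ^ β) ^ 2 with hK_def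
  have hs0 : 0 ≤ s := hs ▸ sum_nonneg fun k _ => (hx k).le
  have hK : 0 ≤ K := by
    have hγ : 0 ≤ γ * s ^ (γ - 1) := mul_nonneg (hβ0.trans hβγ) (Real.rpow_nonneg hs0 _)
    have hβ : 0 ≤ α * β * s ^ (β - 1) := by positivity
    exact div_nonneg (mul_nonneg hμ.le (add_nonneg hγ hβ)) (sq_nonneg _)
  have hbalance : ∀ k, c k * ρ * x k ^ (ρ - 1) + K * x k = μ / (s ^ γ + α * s ^ β) := fun k => by
    linarith [hfoc k, show μ * x k * (γ * s ^ (γ - 1) + α * β * s ^ (β - 1)) /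
      (s ^ γ + α * s ^ β) ^ 2 = K * x k by rw [hK_def]; ring]
  have hρ0 : 0 < ρ := by linarith
  have hlhs := mul_rpow_add_mul_lt_of_lt (mul_pos (hc0 i) hρ0)
    (mul_le_mul_of_nonneg_right (hc hij) hρ0.le) (sub_pos.2 hρ) hK (hx i).le hlt
  linarith [hbalance i, hbalance j]

theorem stmt_12 (n : ℕ) (μ α β γ ρ : ℝ) (c x : Fin n → ℝ)
    (hμ : 0 < μ) (hα : 0 ≤ α) (hβ0 : 0 ≤ β) (hβγ : β ≤ γ) (hγ1 : γ ≤ 1) (hρ : 1 < ρ)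
    (hc0 : ∀ i, 0 < c i) (hc : Monotone c)
    (hx : ∀ i, 0 < x i)
    (s : ℝ) (hs : s = ∑ i, x i)
    (hfoc : ∀ i, μ / (s ^ γ + α * s ^ β)
        - μ * x i * (γ * s ^ (γ - 1) + α * β * s ^ (β - 1)) / (s ^ γ + α * s ^ β) ^ 2
        - c i * ρ * (x i) ^ (ρ - 1) = 0) :
    ∀ i j : Fin n, i ≤ j → x j ≤ x i :=
  stmt_12_general n μ α β γ ρ c x hμ hα hβ0 hβγ hρ hc0 hc hx s hs hfoc
end

section
/- Suppose x ∈ (0,∞)^n satisfies the first-order equilibrium conditions with 0 < c₁ ≤ ... ≤ c_n, μ > 0, α ≥ 0, 0 ≤ β ≤ γ ≤ 1, ρ ≥ 1, s = ∑_i x_i. If x_i ≥ x_j for some i, j, then u_i(x) ≥ u_j(x), where u_k(x) = μ x_k/(s^γ + α s^β) − c_k x_k^ρ. -/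
/-!
Write `A = μ / D` and `B = μ E / D²` with `D = s^γ + α s^β` and `E = γ s^(γ-1) + α β s^(β-1)`
(the derivative of `D`). The first-order condition reads `A - B x_k = c_k ρ x_k^(ρ-1)`; multiplying
by `x_k / ρ` eliminates the cost term, so `u_k = (1 - 1/ρ) A x_k + B x_k² / ρ`. Both coefficients
are nonnegative, hence this is monotone in `x_k ≥ 0`.
-/

lemma sub_mul_rpow_eq_of_sub_mul_eq {a b c ρ x : ℝ} (hρ : ρ ≠ 0) (hx : 0 ≤ x)
    (hfoc : a - b * x = c * ρ * x ^ (ρ - 1)) :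
    a * x - c * x ^ ρ = (1 - ρ⁻¹) * a * x + ρ⁻¹ * b * x ^ 2 := by
  have hpow : x ^ ρ = x ^ (ρ - 1) * x := by
    rw [← Real.rpow_add_one' hx (by simpa using hρ), sub_add_cancel]
  have hcost : c * x ^ ρ = ρ⁻¹ * (a - b * x) * x := by
    rw [hpow, hfoc]
    field_simp
  rw [hcost]
  ring

lemma mul_add_mul_sq_le_of_le {a b ρ x y : ℝ} (ha : 0 ≤ a) (hb : 0 ≤ b) (hρ : 1 ≤ ρ)
    (hy : 0 ≤ y) (hyx : y ≤ x) :
    (1 - ρ⁻¹) * a * y + ρ⁻¹ * b * y ^ 2 ≤ (1 - ρ⁻¹) * a * x + ρ⁻¹ * b * x ^ 2 := by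
  have hinv : ρ⁻¹ ≤ 1 := inv_le_one_of_one_le₀ hρ
  have hinv0 : 0 ≤ ρ⁻¹ := inv_nonneg.mpr (zero_le_one.trans hρ)
  have hlin : 0 ≤ 1 - ρ⁻¹ := sub_nonneg.mpr hinv
  gcongr

lemma rpow_add_mul_rpow_pos {s α β γ : ℝ} (hs : 0 < s) (hα : 0 ≤ α) :
    0 < s ^ γ + α * s ^ β := by
  have := Real.rpow_pos_of_pos hs β
  have := Real.rpow_pos_of_pos hs γ
  positivity

lemma mul_rpow_add_mul_rpow_nonneg {s α β γ : ℝ} (hs : 0 < s) (hα : 0 ≤ α) (hβ : 0 ≤ β)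
    (hγ : 0 ≤ γ) : 0 ≤ γ * s ^ (γ - 1) + α * β * s ^ (β - 1) := by
  have := Real.rpow_pos_of_pos hs (β - 1)
  have := Real.rpow_pos_of_pos hs (γ - 1)
  positivity

theorem stmt_14_general (n : ℕ) (μ α β γ ρ : ℝ) (c x : Fin n → ℝ)
    (hμ : 0 < μ) (hα : 0 ≤ α) (hβ0 : 0 ≤ β) (hβγ : β ≤ γ) (hρ : 1 ≤ ρ)
    (hx : ∀ k, 0 < x k)
    (s : ℝ) (hspos : 0 < s)
    (hfoc : ∀ k, μ / (s ^ γ + α * s ^ β)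
        - μ * x k * (γ * s ^ (γ - 1) + α * β * s ^ (β - 1)) / (s ^ γ + α * s ^ β) ^ 2
        = c k * ρ * (x k) ^ (ρ - 1))
    (i j : Fin n) (hij : x i ≥ x j) :
    μ * x i / (s ^ γ + α * s ^ β) - c i * (x i) ^ ρ
      ≥ μ * x j / (s ^ γ + α * s ^ β) - c j * (x j) ^ ρ := by
  set D := s ^ γ + α * s ^ β
  set E := γ * s ^ (γ - 1) + α * β * s ^ (β - 1)
  have hD : 0 < D := rpow_add_mul_rpow_pos hspos hα
  have hE : 0 ≤ E := mul_rpow_add_mul_rpow_nonneg hspos hα hβ0 (hβ0.trans hβγ)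
  have hu : ∀ k, μ * x k / D - c k * x k ^ ρ
      = (1 - ρ⁻¹) * (μ / D) * x k + ρ⁻¹ * (μ * E / D ^ 2) * x k ^ 2 := fun k => by
    rw [mul_div_right_comm]
    exact sub_mul_rpow_eq_of_sub_mul_eq (by linarith) (hx k).le (by rw [← hfoc k]; ring)
  rw [ge_iff_le, hu i, hu j]
  exact mul_add_mul_sq_le_of_le (by positivity) (by positivity) hρ (hx j).le hij

theorem stmt_14 (n : ℕ) (μ α β γ ρ : ℝ) (c x : Fin n → ℝ)
    (hμ : 0 < μ) (hα : 0 ≤ α) (hβ0 : 0 ≤ β) (hβγ : β ≤ γ) (hγ1 : γ ≤ 1) (hρ : 1 ≤ ρ)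
    (hc0 : ∀ k, 0 < c k) (hc : Monotone c)
    (hx : ∀ k, 0 < x k)
    (s : ℝ) (hs : s = ∑ k, x k) (hspos : 0 < s)
    (hfoc : ∀ k, μ / (s ^ γ + α * s ^ β)
        - μ * x k * (γ * s ^ (γ - 1) + α * β * s ^ (β - 1)) / (s ^ γ + α * s ^ β) ^ 2
        = c k * ρ * (x k) ^ (ρ - 1))
    (i j : Fin n) (hij : x i ≥ x j) :
    μ * x i / (s ^ γ + α * s ^ β) - c i * (x i) ^ ρ
      ≥ μ * x j / (s ^ γ + α * s ^ β) - c j * (x j) ^ ρ :=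
  stmt_14_general n μ α β γ ρ c x hμ hα hβ0 hβγ hρ hx s hspos hfoc i j hij
end
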